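/- arXiv:math/0302313 — 2 statements merged into one kernel-verified Lean document; each statement's English description precedes it below -/
import Mathlib

section
/- Let Δ be (a+1)-CLeray, i.e., c ≥ a and H̃_{c-a}(lk_Δ S) = 0 for all S with |S| ≥ a (where c-1 is the frame dimension of Δ). Then every restriction Δ_R (R ⊆ [n]) is also (a+1)-CLeray. -/
open Finset

namespace SCx

variable (k : Type) [Field k] {n : ℕ}

/-- An (abstract) simplicial complex on the vertex set `Fin n`:
a set of finsets closed under taking subsets. -/
def IsComplex (Δ : Set (Finset (Fin n))) : Prop :=
  ∀ F ∈ Δ, ∀ G ⊆ F, G ∈ Δ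

/-- Simplicial `p`-chains with coefficients in `k`: functions on the faces of
cardinality `p+1`. -/
abbrev Chains (Δ : Set (Finset (Fin n))) (p : ℤ) : Type :=
  {F : Finset (Fin n) // F ∈ Δ ∧ (F.card : ℤ) = p + 1} → k

open Classical in
/-- The underlying function of the simplicial boundary map, written via its
transpose formula:
`(∂ f) G = ∑_{x : insert x G ∈ Δ} (-1)^{pos of x in insert x G} f (insert x G)`. -/
noncomputable def boundaryFun (Δ : Set (Finset (Fin n))) (p : ℤ)
    (f : Chains k Δ p) : Chains k Δ (p - 1) := fun G => ∑ x : Fin n,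
  if h : x ∉ G.1 ∧ insert x G.1 ∈ Δ then
    (-1 : k) ^ (G.1.filter (fun y => y < x)).card *
      f ⟨insert x G.1, h.2, by
        have hc := G.2.2
        rw [Finset.card_insert_of_notMem h.1]
        push_cast at hc ⊢
        omega⟩
  else 0

/-- The simplicial boundary map. -/
noncomputable def boundary (Δ : Set (Finset (Fin n))) (p : ℤ) :
    Chains k Δ p →ₗ[k] Chains k Δ (p - 1) where
  toFun := boundaryFun k Δ p
  map_add' f g := by
    funext G
    unfold boundaryFun
    rw [Pi.add_apply]
    rw [← Finset.sum_add_distrib]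
    refine Finset.sum_congr rfl fun x _ => ?_
    split_ifs with h
    · rw [Pi.add_apply]; ring
    · rw [add_zero]
  map_smul' c f := by
    funext G
    unfold boundaryFun
    simp only [RingHom.id_apply, Pi.smul_apply, smul_eq_mul, Finset.mul_sum]
    refine Finset.sum_congr rfl fun x _ => ?_
    split_ifs with h
    · ring
    · rw [mul_zero]

/-- Transport of chains along an equality of degrees. -/
noncomputable def chainsCongr (Δ : Set (Finset (Fin n))) {p q : ℤ} (h : p = q) :
    Chains k Δ p ≃ₗ[k] Chains k Δ q := by
  subst h; exact LinearEquiv.refl k _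

noncomputable def cycles (Δ : Set (Finset (Fin n))) (p : ℤ) : Submodule k (Chains k Δ p) :=
  LinearMap.ker (boundary k Δ p)

noncomputable def boundaries (Δ : Set (Finset (Fin n))) (p : ℤ) : Submodule k (Chains k Δ p) :=
  LinearMap.range ((chainsCongr k Δ (show p + 1 - 1 = p by ring)).toLinearMap ∘ₗ
    boundary k Δ (p + 1))

/-- Reduced simplicial homology of `Δ` in degree `p`, with coefficients in the field `k`,
defined as cycles modulo (boundaries intersected with cycles).  With this convention
`H̃_{-1}({∅}) = k`. -/
abbrev ReducedHomology (Δ : Set (Finset (Fin n))) (p : ℤ) :=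
  ↥(cycles k Δ p) ⧸ (Submodule.comap (cycles k Δ p).subtype (boundaries k Δ p))

/-- The Alexander dual of `Δ`. -/
def dual (Δ : Set (Finset (Fin n))) : Set (Finset (Fin n)) := {F | Fᶜ ∉ Δ}

/-- The restriction `Δ_R` of `Δ` to a vertex subset `R`. -/
def restrict (Δ : Set (Finset (Fin n))) (R : Finset (Fin n)) : Set (Finset (Fin n)) :=
  {F | F ∈ Δ ∧ F ⊆ R}

/-- The link `lk_Δ S`. -/
def link (Δ : Set (Finset (Fin n))) (S : Finset (Fin n)) : Set (Finset (Fin n)) :=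
  {F | Disjoint F S ∧ F ∪ S ∈ Δ}

/-- `Δ_R^{S,T} = {F ⊆ R : F ∪ S ∈ Δ}` (for `T` the complement of `R ∪ S`). -/
def sub (Δ : Set (Finset (Fin n))) (R S : Finset (Fin n)) : Set (Finset (Fin n)) :=
  {F | F ⊆ R ∧ F ∪ S ∈ Δ}

/-- `Δ` has dimension `d - 1`, i.e. `d` is the maximal cardinality of a face. -/
def IsDim (Δ : Set (Finset (Fin n))) (d : ℕ) : Prop :=
  (∀ F ∈ Δ, F.card ≤ d) ∧ ∃ F ∈ Δ, F.card = d

/-- `Δ` has frame dimension `c - 1`, i.e. `c` is the largest integer such that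
every `c`-subset of `[n]` is a face of `Δ`. -/
def IsFrame (Δ : Set (Finset (Fin n))) (c : ℕ) : Prop :=
  (∀ F : Finset (Fin n), F.card ≤ c → F ∈ Δ) ∧
    ∃ F : Finset (Fin n), F.card = c + 1 ∧ F ∉ Δ

/-- A facet: a maximal face. -/
def IsFacet (Δ : Set (Finset (Fin n))) (F : Finset (Fin n)) : Prop :=
  F ∈ Δ ∧ ∀ G ∈ Δ, F ⊆ G → F = G

/-!
Write `Δ_W^S = {F ⊆ W | F ∪ S ∈ Δ}` (`sub Δ W S`). For `W` disjoint from `S` this is the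
restriction of `lk_Δ S` to `W`; in particular `lk_Δ S = Δ_{Sᶜ}^S` and `lk_{Δ_R} S = Δ_{R∖S}^S`.

For a vertex `v` of a complex `Γ`, a chain of `Γ` amounts to a chain of the deletion `Γ ∖ v`
together with a chain of `lk_Γ v` one degree lower (the faces through `v`), and under this splitting
the boundary of `Γ` becomes the mapping cone of the inclusion `lk_Γ v → Γ ∖ v`. Hence
`H̃_d Γ = H̃_d (lk_Γ v) = 0` implies `H̃_d (Γ ∖ v) = 0`, and `H̃_d (Γ ∖ v) = H̃_{d-1} (lk_Γ v) = 0`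
implies `H̃_d Γ = 0`.

As `Δ_W^S ∖ v = Δ_{W∖v}^S` and `lk v = Δ_{W∖v}^{S ∪ v}` for `v ∈ W`, the first rule, deleting
from `Δ_{Sᶜ}^S = lk_Δ S` the vertices outside `W` one at a time, carries the vanishing of
`H̃_{c-a}` from the links `lk_Δ S` with `|S| ≥ a` to every `Δ_W^S`. The second rule, by induction on `W` starting from `Δ_∅^S ⊆ {∅}`,
raises the degree one step at a time, up to `c_R - a ≥ c - a`.
-/

section Homology

variable {k} {Δ : Set (Finset (Fin n))}

lemma chain_apply_congr {M : Type} {p : ℤ} (f : Chains M Δ p)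
    (F : {F : Finset (Fin n) // F ∈ Δ ∧ (F.card : ℤ) = p + 1}) {G : Finset (Fin n)}
    (h : F.1 = G) : f F = f ⟨G, h ▸ F.2⟩ := by
  subst h; rfl

lemma mem_boundaries_sub_one {p : ℤ} (z : Chains k Δ (p - 1)) :
    z ∈ boundaries k Δ (p - 1) ↔ ∃ w : Chains k Δ p, boundary k Δ p w = z := by
  have key : ∀ q r (h : q + 1 = r) (z : Chains k Δ q), z ∈ boundaries k Δ q ↔
      ∃ w : Chains k Δ r, chainsCongr k Δ (by omega) (boundary k Δ r w) = z := by
    rintro q r rfl z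
    rfl
  exact key (p - 1) p (by ring) z

lemma subsingleton_reducedHomology_iff {p : ℤ} :
    Subsingleton (ReducedHomology k Δ (p - 1)) ↔
      ∀ z : Chains k Δ (p - 1), boundary k Δ (p - 1) z = 0 →
        ∃ w : Chains k Δ p, boundary k Δ p w = z := by
  rw [Submodule.Quotient.subsingleton_iff, Submodule.comap_subtype_eq_top]
  simp only [SetLike.le_def, cycles, LinearMap.mem_ker, mem_boundaries_sub_one]

lemma subsingleton_reducedHomology_of_forall_card_ne {p : ℤ}
    (h : ∀ F ∈ Δ, (F.card : ℤ) ≠ p + 1) : Subsingleton (ReducedHomology k Δ p) := by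
  have : IsEmpty {F : Finset (Fin n) // F ∈ Δ ∧ (F.card : ℤ) = p + 1} :=
    ⟨fun F => h F.1 F.2.1 F.2.2⟩
  infer_instance

open Classical in
noncomputable def extendByZero {Δ' : Set (Finset (Fin n))} (Δ : Set (Finset (Fin n))) (p : ℤ) :
    Chains k Δ' p →ₗ[k] Chains k Δ p where
  toFun f G := if h : G.1 ∈ Δ' then f ⟨G.1, h, G.2.2⟩ else 0
  map_add' f g := funext fun G => by by_cases h : G.1 ∈ Δ' <;> simp [h]
  map_smul' c f := funext fun G => by by_cases h : G.1 ∈ Δ' <;> simp [h]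

lemma boundary_extendByZero {Δ' : Set (Finset (Fin n))} (hΔ' : IsComplex Δ') (h : Δ' ⊆ Δ)
    (p : ℤ) (f : Chains k Δ' p) :
    boundary k Δ p (extendByZero Δ p f) = extendByZero Δ (p - 1) (boundary k Δ' p f) := by
  funext G
  simp only [boundary, boundaryFun, extendByZero, LinearMap.coe_mk, AddHom.coe_mk]
  split_ifs with hG
  · refine sum_congr rfl fun x _ => ?_
    by_cases hx : x ∉ G.1 ∧ insert x G.1 ∈ Δ'
    · rw [dif_pos ⟨hx.1, h hx.2⟩, dif_pos hx, dif_pos hx.2]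
    · by_cases hxΔ : x ∉ G.1 ∧ insert x G.1 ∈ Δ
      · rw [dif_pos hxΔ, dif_neg hx, dif_neg fun hmem => hx ⟨hxΔ.1, hmem⟩, mul_zero]
      · rw [dif_neg hxΔ, dif_neg hx]
  · refine sum_eq_zero fun x _ => ?_
    split_ifs with hxΔ hx
    · exact absurd (hΔ' _ hx _ (subset_insert _ _)) hG
    · rw [mul_zero]
    · rfl

end Homology

lemma neg_one_pow_card_filter_lt_insert {K : Type} [Ring K] {s : Finset (Fin n)} {x : Fin n}
    (hx : x ∉ s) (y : Fin n) : (-1 : K) ^ ((insert x s).filter (· < y)).card =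
      (if x < y then -1 else 1) * (-1) ^ (s.filter (· < y)).card := by
  rw [filter_insert]
  split_ifs with hxy
  · rw [card_insert_of_notMem fun h => hx (mem_filter.1 h).1, pow_succ']
  · rw [one_mul]

section VertexDecomposition

variable {k} (Γ : Set (Finset (Fin n))) (v : Fin n)

def vertexLink : Set (Finset (Fin n)) := {F | v ∉ F ∧ insert v F ∈ Γ}

def vertexDeletion : Set (Finset (Fin n)) := {F | F ∈ Γ ∧ v ∉ F}

variable {Γ v}

@[simp]
lemma mem_vertexLink {F : Finset (Fin n)} : F ∈ vertexLink Γ v ↔ v ∉ F ∧ insert v F ∈ Γ :=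
  Iff.rfl

@[simp]
lemma mem_vertexDeletion {F : Finset (Fin n)} : F ∈ vertexDeletion Γ v ↔ F ∈ Γ ∧ v ∉ F :=
  Iff.rfl

lemma isComplex_vertexLink (hΓ : IsComplex Γ) : IsComplex (vertexLink Γ v) :=
  fun _ hF _ hGF => ⟨fun h => hF.1 (hGF h), hΓ _ hF.2 _ (insert_subset_insert v hGF)⟩

lemma vertexLink_subset_vertexDeletion (hΓ : IsComplex Γ) :
    vertexLink Γ v ⊆ vertexDeletion Γ v :=
  fun _ hF => ⟨hΓ _ hF.2 _ (subset_insert _ _), hF.1⟩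

variable (Γ v)

noncomputable def deletionPart (p : ℤ) : Chains k Γ p →ₗ[k] Chains k (vertexDeletion Γ v) p :=
  LinearMap.funLeft k k fun F => ⟨F.1, F.2.1.1, F.2.2⟩

noncomputable def linkPart (p : ℤ) : Chains k Γ p →ₗ[k] Chains k (vertexLink Γ v) (p - 1) where
  toFun f F := (-1 : k) ^ (F.1.filter (· < v)).card *
    f ⟨insert v F.1, F.2.1.2, by rw [card_insert_of_notMem F.2.1.1]; have := F.2.2; push_cast; omega⟩
  map_add' f g := funext fun F => mul_add _ _ _
  map_smul' c f := funext fun F => mul_left_comm _ _ _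

open Classical in
lemma deletionPart_boundary (p : ℤ) (f : Chains k Γ p) :
    deletionPart Γ v (p - 1) (boundary k Γ p f) =
      boundary k (vertexDeletion Γ v) p (deletionPart Γ v p f) +
        extendByZero (vertexDeletion Γ v) (p - 1) (linkPart Γ v p f) := by
  funext G
  have hvG : v ∉ G.1 := G.2.1.2
  simp only [Pi.add_apply, boundary, boundaryFun, deletionPart, LinearMap.funLeft_apply,
    extendByZero, linkPart, LinearMap.coe_mk, AddHom.coe_mk]
  rw [Fintype.sum_eq_add_sum_compl v, Fintype.sum_eq_add_sum_compl v]
  simp only [mem_vertexDeletion, mem_insert_self, not_true_eq_false, and_false, dite_false,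
    zero_add, mem_vertexLink, add_comm (∑ _ ∈ _, _)]
  congr 1
  refine sum_congr rfl fun x hx => ?_
  have hxv : v ∉ insert x G.1 := by simpa [hvG, eq_comm] using hx
  simp only [hxv, not_false_eq_true, and_true]

lemma linkPart_boundary (p : ℤ) (f : Chains k Γ p) :
    linkPart Γ v (p - 1) (boundary k Γ p f) =
      -boundary k (vertexLink Γ v) (p - 1) (linkPart Γ v p f) := by
  funext F
  have hvF : v ∉ F.1 := F.2.1.1
  simp only [Pi.neg_apply, boundary, boundaryFun, linkPart, LinearMap.coe_mk,
    AddHom.coe_mk, mul_sum, ← sum_neg_distrib]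
  refine sum_congr rfl fun x _ => ?_
  by_cases hxv : x = v
  · subst hxv
    simp
  by_cases hx : x ∉ F.1 ∧ insert v (insert x F.1) ∈ Γ
  · have hxvF : x ∉ insert v F.1 := by simp [hxv, hx.1]
    have hvxF : v ∉ insert x F.1 := by simp [Ne.symm hxv, hvF]
    rw [dif_pos ⟨hxvF, insert_comm x v F.1 ▸ hx.2⟩, dif_pos ⟨hx.1, hvxF, hx.2⟩,
      neg_one_pow_card_filter_lt_insert hvF, neg_one_pow_card_filter_lt_insert hx.1,
      chain_apply_congr f _ (insert_comm x v F.1)]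
    -- exactly one of `v < x`, `x < v` holds, whence the relative sign `-1`
    rcases lt_or_gt_of_ne hxv with hlt | hlt
    · rw [if_neg hlt.not_gt, if_pos hlt]
      ring
    · rw [if_pos hlt, if_neg hlt.not_gt]
      ring
  · rw [dif_neg fun h => hx ⟨fun hxF => h.1 (mem_insert_of_mem hxF), insert_comm x v F.1 ▸ h.2⟩,
      dif_neg fun h => hx ⟨h.1, h.2.2⟩, mul_zero, neg_zero]

variable {Γ v}

lemma chains_ext_of_parts {p : ℤ} {f g : Chains k Γ p}
    (hdel : deletionPart Γ v p f = deletionPart Γ v p g)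
    (hlk : linkPart Γ v p f = linkPart Γ v p g) : f = g := by
  funext G
  by_cases hv : v ∈ G.1
  · have hG : insert v (G.1.erase v) = G.1 := insert_erase hv
    have hF : G.1.erase v ∈ vertexLink Γ v := ⟨notMem_erase v _, by rw [hG]; exact G.2.1⟩
    have h := congrFun hlk ⟨G.1.erase v, hF, by rw [cast_card_erase_of_mem hv, G.2.2]; ring⟩
    simp only [linkPart, LinearMap.coe_mk, AddHom.coe_mk] at h
    rw [chain_apply_congr f _ hG, chain_apply_congr g _ hG] at h
    exact mul_left_cancel₀ (pow_ne_zero _ (neg_ne_zero.2 one_ne_zero)) h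
  · exact congrFun hdel ⟨G.1, ⟨G.2.1, hv⟩, G.2.2⟩

lemma exists_deletionPart_linkPart {p : ℤ} (a : Chains k (vertexDeletion Γ v) p)
    (b : Chains k (vertexLink Γ v) (p - 1)) :
    ∃ f : Chains k Γ p, deletionPart Γ v p f = a ∧ linkPart Γ v p f = b := by
  refine ⟨fun G => if hv : v ∈ G.1 then
      (-1) ^ (G.1.filter (· < v)).card * b ⟨G.1.erase v,
        ⟨notMem_erase v _, (insert_erase hv).symm ▸ G.2.1⟩,
        by rw [cast_card_erase_of_mem hv, G.2.2]; ring⟩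
    else a ⟨G.1, ⟨G.2.1, hv⟩, G.2.2⟩, ?_, ?_⟩
  · funext G
    simp [deletionPart, G.2.1.2]
  · funext F
    have hvF : v ∉ F.1 := F.2.1.1
    simp only [linkPart, LinearMap.coe_mk, AddHom.coe_mk, dif_pos (mem_insert_self v F.1),
      neg_one_pow_card_filter_lt_insert hvF, lt_irrefl, if_false, one_mul, ← mul_assoc,
      ← pow_add, Even.neg_one_pow ⟨_, rfl⟩]
    exact chain_apply_congr b _ (erase_insert hvF)

lemma subsingleton_reducedHomology_vertexDeletion (hΓ : IsComplex Γ) (v : Fin n) {d : ℤ}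
    (hΓd : Subsingleton (ReducedHomology k Γ d))
    (hlk : Subsingleton (ReducedHomology k (vertexLink Γ v) d)) :
    Subsingleton (ReducedHomology k (vertexDeletion Γ v) d) := by
  obtain ⟨p, rfl⟩ : ∃ p, d = p - 1 := ⟨d + 1, by ring⟩
  rw [subsingleton_reducedHomology_iff] at *
  intro z hz
  obtain ⟨Z, hZdel, hZlk⟩ := exists_deletionPart_linkPart (Γ := Γ) z 0
  have hZ : boundary k Γ (p - 1) Z = 0 := chains_ext_of_parts (v := v)
    (by rw [deletionPart_boundary, hZdel, hZlk, hz, map_zero, add_zero, map_zero])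
    (by rw [linkPart_boundary, hZlk, map_zero, neg_zero, map_zero])
  obtain ⟨w, hw⟩ := hΓd Z hZ
  have hu : boundary k (vertexLink Γ v) (p - 1) (linkPart Γ v p w) = 0 := by
    rw [← neg_eq_zero, ← linkPart_boundary, hw, hZlk]
  obtain ⟨t, ht⟩ := hlk _ hu
  refine ⟨deletionPart Γ v p w + extendByZero _ p t, ?_⟩
  rw [map_add, boundary_extendByZero (isComplex_vertexLink hΓ)
    (vertexLink_subset_vertexDeletion hΓ), ht, ← deletionPart_boundary, hw, hZdel]

lemma subsingleton_reducedHomology_of_vertexDeletion (hΓ : IsComplex Γ) (v : Fin n) {d : ℤ}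
    (hdel : Subsingleton (ReducedHomology k (vertexDeletion Γ v) d))
    (hlk : Subsingleton (ReducedHomology k (vertexLink Γ v) (d - 1))) :
    Subsingleton (ReducedHomology k Γ d) := by
  obtain ⟨p, rfl⟩ : ∃ p, d = p - 1 := ⟨d + 1, by ring⟩
  rw [subsingleton_reducedHomology_iff] at *
  intro z hz
  have hb : boundary k (vertexLink Γ v) (p - 1 - 1) (linkPart Γ v (p - 1) z) = 0 := by
    rw [← neg_eq_zero, ← linkPart_boundary, hz, map_zero]
  obtain ⟨t, ht⟩ := hlk _ hb
  have ha : boundary k (vertexDeletion Γ v) (p - 1)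
      (deletionPart Γ v (p - 1) z + extendByZero _ (p - 1) t) = 0 := by
    rw [map_add, boundary_extendByZero (isComplex_vertexLink hΓ)
      (vertexLink_subset_vertexDeletion hΓ), ht, ← deletionPart_boundary, hz, map_zero]
  obtain ⟨s, hs⟩ := hdel _ ha
  obtain ⟨w, hwdel, hwlk⟩ := exists_deletionPart_linkPart s (-t)
  refine ⟨w, chains_ext_of_parts (v := v) ?_ ?_⟩
  · rw [deletionPart_boundary, hwdel, hwlk, hs, map_neg, add_neg_cancel_right]
  · rw [linkPart_boundary, hwlk, map_neg, neg_neg, ht]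

end VertexDecomposition

section Restrictions

variable {Δ : Set (Finset (Fin n))}

lemma isComplex_sub (hΔ : IsComplex Δ) (W S : Finset (Fin n)) : IsComplex (sub Δ W S) :=
  fun _ hF _ hGF => ⟨hGF.trans hF.1, hΔ _ hF.2 _ (union_subset_union hGF subset_rfl)⟩

lemma vertexDeletion_sub (W S : Finset (Fin n)) (v : Fin n) :
    vertexDeletion (sub Δ W S) v = sub Δ (W.erase v) S := by
  ext F
  simp only [mem_vertexDeletion, sub, Set.mem_ofPred_eq, subset_erase]
  tauto

lemma vertexLink_sub {W : Finset (Fin n)} (S : Finset (Fin n)) {v : Fin n} (hv : v ∈ W) :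
    vertexLink (sub Δ W S) v = sub Δ (W.erase v) (insert v S) := by
  ext F
  simp only [mem_vertexLink, sub, Set.mem_ofPred_eq, subset_erase, insert_subset_iff, hv,
    true_and, insert_union, union_insert]
  tauto

lemma sub_compl_self (S : Finset (Fin n)) : sub Δ Sᶜ S = link Δ S := by
  ext F
  simp [sub, link, subset_compl_iff_disjoint_right]

lemma link_restrict {R S : Finset (Fin n)} (hSR : S ⊆ R) :
    link (restrict Δ R) S = sub Δ (R \ S) S := by
  ext F
  simp only [link, restrict, sub, Set.mem_ofPred_eq, subset_sdiff, union_subset_iff, hSR, and_true]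
  tauto

end Restrictions

section Vanishing

variable {k} {Δ : Set (Finset (Fin n))} {a : ℕ} {d : ℤ}

lemma subsingleton_reducedHomology_sub_compl_union (hΔ : IsComplex Δ)
    (hlink : ∀ S : Finset (Fin n), a ≤ S.card → Subsingleton (ReducedHomology k (link Δ S) d))
    (T : Finset (Fin n)) {S : Finset (Fin n)} (hST : Disjoint S T) (hS : a ≤ S.card) :
    Subsingleton (ReducedHomology k (sub Δ (S ∪ T)ᶜ S) d) := by
  induction T using Finset.induction_on generalizing S with
  | empty => rw [union_empty, sub_compl_self]; exact hlink S hS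
  | @insert v T hvT ih =>
    obtain ⟨hvS, hST⟩ := disjoint_insert_right.1 hST
    have hv : v ∈ (S ∪ T)ᶜ := by simp [hvS, hvT]
    have hdel := subsingleton_reducedHomology_vertexDeletion (isComplex_sub hΔ _ S) v (ih hST hS)
      (by
        rw [vertexLink_sub S hv, ← compl_insert, ← insert_union]
        exact ih (disjoint_insert_left.2 ⟨hvT, hST⟩) (hS.trans (card_le_card (subset_insert _ _))))
    rwa [vertexDeletion_sub, ← compl_insert, ← union_insert] at hdel

lemma subsingleton_reducedHomology_sub_add_one (hΔ : IsComplex Δ) (hd : -1 ≤ d)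
    (h : ∀ W S : Finset (Fin n), Disjoint W S → a ≤ S.card →
      Subsingleton (ReducedHomology k (sub Δ W S) d))
    (W : Finset (Fin n)) {S : Finset (Fin n)} (hWS : Disjoint W S) (hS : a ≤ S.card) :
    Subsingleton (ReducedHomology k (sub Δ W S) (d + 1)) := by
  induction W using Finset.induction_on with
  | empty =>
    refine subsingleton_reducedHomology_of_forall_card_ne fun F hF => ?_
    rw [subset_empty.1 hF.1, card_empty]
    omega
  | @insert v W hvW ih =>
    obtain ⟨hvS, hWS⟩ := disjoint_insert_left.1 hWS
    refine subsingleton_reducedHomology_of_vertexDeletion (isComplex_sub hΔ _ S) v ?_ ?_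
    · rw [vertexDeletion_sub, erase_insert hvW]
      exact ih hWS
    · rw [vertexLink_sub S (mem_insert_self v W), erase_insert hvW, add_sub_cancel_right]
      exact h W _ (disjoint_insert_right.2 ⟨hvW, hWS⟩) (hS.trans (card_le_card (subset_insert _ _)))

lemma subsingleton_reducedHomology_sub (hΔ : IsComplex Δ) (hd : -1 ≤ d)
    (hlink : ∀ S : Finset (Fin n), a ≤ S.card → Subsingleton (ReducedHomology k (link Δ S) d))
    {e : ℤ} (hde : d ≤ e) (W : Finset (Fin n)) {S : Finset (Fin n)} (hWS : Disjoint W S)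
    (hS : a ≤ S.card) : Subsingleton (ReducedHomology k (sub Δ W S) e) := by
  induction e, hde using Int.leInduction generalizing W S with
  | base =>
    have hW : (S ∪ (W ∪ S)ᶜ)ᶜ = W := by
      ext x
      have : x ∈ W → x ∉ S := fun h => disjoint_left.1 hWS h
      simp only [compl_union, mem_inter, mem_compl]
      tauto
    rw [← hW]
    exact subsingleton_reducedHomology_sub_compl_union hΔ hlink _ (disjoint_compl_right.mono_right
      (compl_subset_compl.2 subset_union_right)) hS
  | succ e hde ih =>
    exact subsingleton_reducedHomology_sub_add_one hΔ (hd.trans hde) ih W hWS hS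

end Vanishing

theorem stmt13_general (k : Type) [Field k] {n : ℕ} (Δ : Set (Finset (Fin n)))
    (hΔ : IsComplex Δ) (a c : ℕ) (hc : IsFrame Δ c) (hac : a ≤ c)
    (hCL : ∀ S : Finset (Fin n), a ≤ S.card →
      Subsingleton (ReducedHomology k (link Δ S) ((c : ℤ) - a)))
    (R : Finset (Fin n)) (cR : ℕ)
    (hcR2 : ∃ F ⊆ R, F.card = cR + 1 ∧ F ∉ restrict Δ R) :
    a ≤ cR ∧ ∀ S ⊆ R, a ≤ S.card →
      Subsingleton (ReducedHomology k (link (restrict Δ R) S) ((cR : ℤ) - a)) := by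
  have hccR : c ≤ cR := by
    obtain ⟨F, hFR, hF, hFΔ⟩ := hcR2
    by_contra! h
    exact hFΔ ⟨hc.1 F (by omega), hFR⟩
  refine ⟨hac.trans hccR, fun S hSR hS => ?_⟩
  rw [link_restrict hSR]
  exact subsingleton_reducedHomology_sub hΔ (by omega) hCL (by omega) (R \ S) sdiff_disjoint hS

/-- if `Δ` is `(a+1)`-CLeray then so is every restriction `Δ_R`
(whose frame parameter, relative to the vertex set `R`, is `cR`). -/
theorem stmt13 (k : Type) [Field k] {n : ℕ} (Δ : Set (Finset (Fin n)))
    (hΔ : IsComplex Δ) (a c : ℕ) (hc : IsFrame Δ c) (hac : a ≤ c)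
    (hCL : ∀ S : Finset (Fin n), a ≤ S.card →
      Subsingleton (ReducedHomology k (link Δ S) ((c : ℤ) - a)))
    (R : Finset (Fin n)) (cR : ℕ)
    (hcR1 : ∀ F ⊆ R, F.card ≤ cR → F ∈ restrict Δ R)
    (hcR2 : ∃ F ⊆ R, F.card = cR + 1 ∧ F ∉ restrict Δ R) :
    a ≤ cR ∧ ∀ S ⊆ R, a ≤ S.card →
      Subsingleton (ReducedHomology k (link (restrict Δ R) S) ((cR : ℤ) - a)) :=
  stmt13_general k Δ hΔ a c hc hac hCL R cR hcR2

end SCx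
end

section
/- If Δ is 2-CLeray (i.e., H̃_{c-1}(lk_Δ S) = 0 for all S with |S| ≥ 1, where c-1 ≥ 0 is the frame dimension of Δ), then for every vertex x of Δ, the frame dimension of lk_Δ{x} is exactly c - 2 (i.e., its frame parameter is c-1). -/
/-!
If every `c`-subset of `V = [n] \ x` were a face of `lk x`, then `lk x` would contain the full
`(c-1)`-skeleton on `V` while all of its links `lk (S ∪ x)` have vanishing `H̃_{c-1}`. Such a
complex contains `V` itself, by induction on `V`: deleting a vertex `y` keeps every link acyclic
in degree `c - 1` (exact sequence `H̃_{c-1}(lk y) → H̃_{c-1}(Γ \ y) → H̃_{c-1}(Γ)`), and when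
`|V| = c + 1` the boundary of the simplex `V` is a cycle that can only bound `V`. Then
`[n] = V ∪ x ∈ Δ`, against the frame dimension being `c - 1`.
-/

open Finset

namespace SCx

variable (k : Type) [Field k] {n : ℕ}

variable {k}

def sign (x : Fin n) (G : Finset (Fin n)) : k :=
  (-1) ^ #{s ∈ G | s < x}

lemma sign_insert {x t : Fin n} {G : Finset (Fin n)} (hx : x ∉ G) :
    sign (k := k) t (insert x G) = if x < t then -sign t G else sign t G := by
  unfold sign
  rw [filter_insert]
  split_ifs with h
  · rw [card_insert_of_notMem (fun hm => hx (mem_of_mem_filter x hm)), pow_succ, mul_neg_one]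
  · rfl

lemma sign_mul_sign_insert_comm {x y : Fin n} {G : Finset (Fin n)} (hxy : x ≠ y)
    (hx : x ∉ G) (hy : y ∉ G) :
    sign (k := k) x G * sign y (insert x G) = -(sign y G * sign x (insert y G)) := by
  rw [sign_insert hx, sign_insert hy]
  rcases hxy.lt_or_gt with h | h <;> simp [h, h.not_gt, mul_comm]

variable (k) in
/-- Chains of every complex on `Fin n` are modelled as functions on all finsets, supported on
its faces; this is the boundary map of the full simplex. -/
def simplexBoundary : (Finset (Fin n) → k) →ₗ[k] (Finset (Fin n) → k) where
  toFun f G := ∑ x, if x ∈ G then 0 else sign x G * f (insert x G)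
  map_add' f g := by
    ext G
    simp only [Pi.add_apply, ← sum_add_distrib]
    refine sum_congr rfl fun x _ => ?_
    split_ifs <;> ring
  map_smul' a f := by
    ext G
    simp only [Pi.smul_apply, smul_eq_mul, RingHom.id_apply, mul_sum]
    refine sum_congr rfl fun x _ => ?_
    split_ifs <;> ring

lemma simplexBoundary_apply (f : Finset (Fin n) → k) (G : Finset (Fin n)) :
    simplexBoundary k f G = ∑ x, if x ∈ G then 0 else sign x G * f (insert x G) := rfl

lemma simplexBoundary_simplexBoundary (f : Finset (Fin n) → k) :
    simplexBoundary k (simplexBoundary k f) = 0 := by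
  ext G
  have hdouble : simplexBoundary k (simplexBoundary k f) G =
      ∑ p : Fin n × Fin n, if p.1 ∈ G ∨ p.2 ∈ insert p.1 G then 0 else
        sign p.1 G * sign p.2 (insert p.1 G) * f (insert p.2 (insert p.1 G)) := by
    rw [simplexBoundary_apply, Fintype.sum_prod_type]
    refine sum_congr rfl fun x _ => ?_
    by_cases hx : x ∈ G <;> simp [hx, simplexBoundary_apply, mul_sum, mul_assoc]
  rw [hdouble, Pi.zero_apply]
  refine sum_ninvolution (s := univ) Prod.swap ?_ ?_ (fun _ => mem_univ _) Prod.swap_swap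
  · rintro ⟨x, y⟩
    by_cases hxy : x = y
    · simp [hxy]
    by_cases hx : x ∈ G
    · simp [hx]
    by_cases hy : y ∈ G
    · simp [hy]
    simp only [hx, hy, mem_insert, hxy, Ne.symm hxy, or_self, if_false, insert_comm y x G,
      sign_mul_sign_insert_comm hxy hx hy, Prod.swap]
    ring
  · rintro ⟨x, y⟩ h hswap
    obtain rfl : y = x := congrArg Prod.fst hswap
    simp at h

/-- Pulls the part of a chain on faces containing `y` back to the link of `y`. -/
def linkChain (y : Fin n) (f : Finset (Fin n) → k) (G : Finset (Fin n)) : k :=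
  if y ∈ G then 0 else sign y G * f (insert y G)

def delChain (y : Fin n) (f : Finset (Fin n) → k) (G : Finset (Fin n)) : k :=
  if y ∈ G then 0 else f G

lemma simplexBoundary_linkChain (y : Fin n) (f : Finset (Fin n) → k) :
    simplexBoundary k (linkChain y f) = -linkChain y (simplexBoundary k f) := by
  ext G
  simp only [simplexBoundary_apply, linkChain, Pi.neg_apply]
  by_cases hy : y ∈ G
  · simp [hy]
  rw [if_neg hy, mul_sum, ← sum_neg_distrib]
  refine sum_congr rfl fun x _ => ?_
  by_cases hx : x ∈ G
  · simp [hx]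
  by_cases hxy : x = y
  · simp [hxy]
  simp only [hx, hy, hxy, mem_insert, Ne.symm hxy, or_self, if_false, insert_comm y x G,
    ← mul_assoc, sign_mul_sign_insert_comm hxy hx hy, neg_mul]

lemma simplexBoundary_delChain (y : Fin n) (f : Finset (Fin n) → k) :
    simplexBoundary k (delChain y f) = delChain y (simplexBoundary k f) - linkChain y f := by
  ext G
  simp only [simplexBoundary_apply, delChain, linkChain, Pi.sub_apply]
  by_cases hy : y ∈ G
  · simp [hy]
  rw [if_neg hy, if_neg hy, ← Fintype.sum_ite_eq' y (fun x => sign x G * f (insert x G)),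
    ← sum_sub_distrib]
  refine sum_congr rfl fun x _ => ?_
  by_cases hx : x ∈ G
  · simp [hx, ne_of_mem_of_not_mem hx hy]
  by_cases hxy : x = y
  · simp [hxy, hy]
  simp [hx, hy, hxy, Ne.symm hxy]

section Complexes

variable {Γ : Set (Finset (Fin n))} {S T F : Finset (Fin n)} {y : Fin n}

lemma mem_link_singleton : F ∈ link Γ {y} ↔ y ∉ F ∧ insert y F ∈ Γ := by
  simp [link]

lemma mem_restrict_compl_singleton : F ∈ restrict Γ {y}ᶜ ↔ F ∈ Γ ∧ y ∉ F := by
  simp [restrict]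

lemma link_empty (Γ : Set (Finset (Fin n))) : link Γ ∅ = Γ := by
  ext F
  simp [link]

lemma link_link (Γ : Set (Finset (Fin n))) (h : Disjoint S T) :
    link (link Γ S) T = link Γ (S ∪ T) := by
  ext F
  simp only [link, Set.mem_ofPred_eq, disjoint_union_left, disjoint_union_right,
    union_assoc, union_comm T S]
  have := h.symm
  tauto

lemma link_eq_empty (hΓ : IsComplex Γ) (hS : S ∉ Γ) : link Γ S = ∅ :=
  Set.eq_empty_of_forall_notMem fun _ hF => hS (hΓ _ hF.2 _ subset_union_right)

lemma link_restrict_compl_singleton (Γ : Set (Finset (Fin n))) (hy : y ∉ S) :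
    link (restrict Γ {y}ᶜ) S = restrict (link Γ S) {y}ᶜ := by
  ext F
  simp only [link, restrict, subset_compl_singleton, Set.mem_ofPred_eq, mem_union, hy, or_false]
  tauto

lemma isComplex_link (hΓ : IsComplex Γ) (S : Finset (Fin n)) : IsComplex (link Γ S) :=
  fun _ hF _ hG => ⟨disjoint_of_subset_left hG hF.1, hΓ _ hF.2 _ (union_subset_union_left hG)⟩

lemma isComplex_restrict (hΓ : IsComplex Γ) (R : Finset (Fin n)) : IsComplex (restrict Γ R) :=
  fun _ hF _ hG => ⟨hΓ _ hF.1 _ hG, hG.trans hF.2⟩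

end Complexes

section Chains

variable {Γ Γ' : Set (Finset (Fin n))} {p c : ℕ} {f g : Finset (Fin n) → k}

/-- Indexed by the number `p` of vertices of a face, i.e. in degree `p - 1`. -/
def IsChainOf (Γ : Set (Finset (Fin n))) (p : ℕ) (f : Finset (Fin n) → k) : Prop :=
  ∀ F, f F ≠ 0 → F ∈ Γ ∧ F.card = p

lemma IsChainOf.mono (hf : IsChainOf Γ p f) (h : Γ ⊆ Γ') : IsChainOf Γ' p f :=
  fun F hF => ⟨h (hf F hF).1, (hf F hF).2⟩

lemma IsChainOf.add (hf : IsChainOf Γ p f) (hg : IsChainOf Γ p g) : IsChainOf Γ p (f + g) := by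
  intro F hF
  by_cases hfF : f F = 0
  · exact hg F (by simpa [hfF] using hF)
  · exact hf F hfF

variable (k) in
/-- `H̃_{c-1}(Γ; k) = 0`. -/
def HomologyVanishes (Γ : Set (Finset (Fin n))) (c : ℕ) : Prop :=
  ∀ z : Finset (Fin n) → k, IsChainOf Γ c z → simplexBoundary k z = 0 →
    ∃ w, IsChainOf Γ (c + 1) w ∧ simplexBoundary k w = z

lemma homologyVanishes_empty : HomologyVanishes k (∅ : Set (Finset (Fin n))) c := by
  intro z hz _
  obtain rfl : z = 0 := funext fun F => by_contra fun hF => (hz F hF).1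
  exact ⟨0, fun F hF => absurd rfl hF, map_zero _⟩

/-- The boundary of the simplex `T` is a cycle, and it bounds only if `T` is a face. -/
lemma mem_of_homologyVanishes {T : Finset (Fin n)} (hT : T.card = c + 1)
    (hsupp : ∀ F ∈ Γ, F ⊆ T) (hbdry : ∀ F ⊂ T, F ∈ Γ) (h : HomologyVanishes k Γ c) : T ∈ Γ := by
  by_contra hTΓ
  have hz : IsChainOf Γ c (simplexBoundary k (Pi.single T 1)) := by
    intro G hG
    rw [simplexBoundary_apply] at hG
    obtain ⟨x, -, hx⟩ := exists_ne_zero_of_sum_ne_zero hG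
    by_cases hxG : x ∈ G
    · simp [hxG] at hx
    obtain rfl : insert x G = T := by
      by_contra hne
      simp [hxG, hne] at hx
    refine ⟨hbdry G (ssubset_insert hxG), ?_⟩
    rw [card_insert_of_notMem hxG] at hT
    omega
  obtain ⟨w, hw, hbw⟩ := h _ hz (simplexBoundary_simplexBoundary _)
  have hw0 : w = 0 := funext fun F => by_contra fun hF =>
    hTΓ (eq_of_subset_of_card_le (hsupp F (hw F hF).1) (by rw [(hw F hF).2, hT]) ▸ (hw F hF).1)
  obtain ⟨t, ht⟩ : T.Nonempty := card_pos.mp (by omega)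
  have hzt : simplexBoundary k (Pi.single T 1) (T.erase t) = sign t (T.erase t) := by
    rw [simplexBoundary_apply, sum_eq_single t]
    · simp [insert_erase ht]
    · intro x _ hxt
      by_cases hx : x ∈ T
      · simp [hx, hxt]
      · have hne : insert x (T.erase t) ≠ T := fun he => hx (he ▸ mem_insert_self x _)
        simp [hne]
    · simp
  rw [← hbw, hw0, map_zero] at hzt
  exact pow_ne_zero _ (neg_ne_zero.mpr one_ne_zero) hzt.symm

/-- The cone construction behind the exact sequence
`H̃_{c-1}(lk y) → H̃_{c-1}(Ξ \ y) → H̃_{c-1}(Ξ)`. -/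
lemma HomologyVanishes.restrict_compl_singleton {Ξ : Set (Finset (Fin n))} {y : Fin n}
    (hΞ : IsComplex Ξ) (h : HomologyVanishes k Ξ c) (hlk : HomologyVanishes k (link Ξ {y}) c) :
    HomologyVanishes k (restrict Ξ {y}ᶜ) c := by
  intro z hz hbz
  have hzy : ∀ F, y ∈ F → z F = 0 := fun F hyF =>
    by_contra fun hF => (mem_restrict_compl_singleton.mp (hz F hF).1).2 hyF
  obtain ⟨w, hw, rfl⟩ := h z (hz.mono fun F hF => hF.1) hbz
  have hu : IsChainOf (link Ξ {y}) c (linkChain y w) := by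
    intro F hF
    simp only [linkChain, ne_eq, ite_eq_left_iff, not_forall, mul_eq_zero, not_or] at hF
    obtain ⟨hyF, -, hwF⟩ := hF
    obtain ⟨hmem, hcard⟩ := hw _ hwF
    rw [card_insert_of_notMem hyF] at hcard
    exact ⟨mem_link_singleton.mpr ⟨hyF, hmem⟩, by omega⟩
  have hbu : simplexBoundary k (linkChain y w) = 0 := by
    ext G
    simp [simplexBoundary_linkChain, linkChain, hzy]
  obtain ⟨v, hv, hbv⟩ := hlk _ hu hbu
  refine ⟨delChain y w + v, IsChainOf.add ?_ (hv.mono fun F hF => ?_), ?_⟩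
  · intro F hF
    simp only [delChain, ne_eq, ite_eq_left_iff, not_forall] at hF
    obtain ⟨hyF, hwF⟩ := hF
    exact ⟨mem_restrict_compl_singleton.mpr ⟨(hw F hwF).1, hyF⟩, (hw F hwF).2⟩
  · obtain ⟨hyF, hmem⟩ := mem_link_singleton.mp hF
    exact mem_restrict_compl_singleton.mpr ⟨hΞ _ hmem _ (subset_insert y F), hyF⟩
  · rw [map_add, simplexBoundary_delChain, hbv, sub_add_cancel]
    ext G
    by_cases hyG : y ∈ G <;> simp [delChain, hyG, hzy]

end Chains

section Bridge

variable {Γ : Set (Finset (Fin n))} {p c : ℕ} {f : Finset (Fin n) → k}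

lemma chainsCongr_apply {p q : ℤ} (h : p = q) (f : Chains k Γ p)
    (G : {F : Finset (Fin n) // F ∈ Γ ∧ (F.card : ℤ) = q + 1}) :
    chainsCongr k Γ h f G = f ⟨G.1, G.2.1, h ▸ G.2.2⟩ := by
  subst h
  rfl

open Classical in
noncomputable def extendChain (Γ : Set (Finset (Fin n))) (p : ℤ) (f : Chains k Γ p) :
    Finset (Fin n) → k :=
  fun F => if h : F ∈ Γ ∧ (F.card : ℤ) = p + 1 then f ⟨F, h⟩ else 0

lemma boundaryFun_eq_simplexBoundary (p : ℤ) (f : Chains k Γ p)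
    (G : {F : Finset (Fin n) // F ∈ Γ ∧ (F.card : ℤ) = p - 1 + 1}) :
    boundaryFun k Γ p f G = simplexBoundary k (extendChain Γ p f) G.1 := by
  rw [boundaryFun, simplexBoundary_apply]
  refine sum_congr rfl fun x _ => ?_
  by_cases hx : x ∈ G.1
  · simp [hx]
  by_cases hxG : insert x G.1 ∈ Γ
  · have hcard : ((insert x G.1).card : ℤ) = p + 1 := by
      rw [card_insert_of_notMem hx]
      push_cast
      linarith [G.2.2]
    rw [dif_pos ⟨hx, hxG⟩, if_neg hx, extendChain, dif_pos ⟨hxG, hcard⟩]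
    rfl
  · rw [dif_neg fun h => hxG h.2, if_neg hx, extendChain, dif_neg fun h => hxG h.1, mul_zero]

lemma IsComplex.simplexBoundary_apply_eq_zero (hΓ : IsComplex Γ) (hf : IsChainOf Γ (p + 1) f)
    {G : Finset (Fin n)} (hG : ¬(G ∈ Γ ∧ G.card = p)) : simplexBoundary k f G = 0 := by
  rw [simplexBoundary_apply]
  refine sum_eq_zero fun x _ => ?_
  by_cases hx : x ∈ G
  · simp [hx]
  by_contra hne
  rw [if_neg hx] at hne
  obtain ⟨hmem, hcard⟩ := hf _ (right_ne_zero_of_mul hne)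
  rw [card_insert_of_notMem hx] at hcard
  exact hG ⟨hΓ _ hmem _ (subset_insert x G), by omega⟩

lemma homologyVanishes_of_subsingleton (hΓ : IsComplex Γ)
    (h : Subsingleton (ReducedHomology k Γ ((c : ℤ) - 1))) : HomologyVanishes k Γ c := by
  intro z hz hbz
  let z' : Chains k Γ ((c : ℤ) - 1) := fun F => z F.1
  have hext : extendChain Γ _ z' = z := by
    funext F
    rw [extendChain]
    split_ifs with hF
    · rfl
    · refine (by_contra fun hzF => hF ?_ : z F = 0).symm
      obtain ⟨hmem, hcard⟩ := hz F hzF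
      exact ⟨hmem, by rw [hcard]; ring⟩
  have hcyc : z' ∈ cycles k Γ ((c : ℤ) - 1) := by
    refine LinearMap.mem_ker.mpr (funext fun G => ?_)
    change boundaryFun k Γ _ z' G = 0
    rw [boundaryFun_eq_simplexBoundary, hext, hbz]
    rfl
  obtain ⟨w, hw⟩ : z' ∈ boundaries k Γ ((c : ℤ) - 1) := by
    have := Subsingleton.elim
      (Submodule.Quotient.mk ⟨z', hcyc⟩ : ReducedHomology k Γ ((c : ℤ) - 1)) 0
    rwa [Submodule.Quotient.mk_eq_zero, Submodule.mem_comap] at this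
  have hw' : IsChainOf Γ (c + 1) (extendChain Γ _ w) := by
    intro F hF
    rw [extendChain] at hF
    split_ifs at hF with hF'
    · exact ⟨hF'.1, by have := hF'.2; omega⟩
    · exact absurd rfl hF
  refine ⟨extendChain Γ _ w, hw', funext fun G => ?_⟩
  by_cases hG : G ∈ Γ ∧ G.card = c
  · have := congrFun hw ⟨G, hG.1, by rw [hG.2]; ring⟩
    rw [LinearMap.comp_apply, LinearEquiv.coe_coe, chainsCongr_apply] at this
    exact (boundaryFun_eq_simplexBoundary _ w _).symm.trans this
  · rw [hΓ.simplexBoundary_apply_eq_zero hw' hG]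
    exact (by_contra fun hzG => hG (hz G hzG) : z G = 0).symm

end Bridge

section Links

variable {Γ : Set (Finset (Fin n))} {c : ℕ} {y : Fin n}

variable (k) in
def LinksHomologyVanish (Γ : Set (Finset (Fin n))) (c : ℕ) : Prop :=
  ∀ S, HomologyVanishes k (link Γ S) c

lemma linksHomologyVanish_link (hΓ : IsComplex Γ)
    (h : ∀ S, y ∈ S → HomologyVanishes k (link Γ S) c) :
    LinksHomologyVanish k (link Γ {y}) c := by
  intro S
  by_cases hy : y ∈ S
  · rw [link_eq_empty (isComplex_link hΓ _) fun hS => (mem_link_singleton.mp hS).1 hy]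
    exact homologyVanishes_empty
  · rw [link_link Γ (disjoint_singleton_left.mpr hy)]
    exact h _ (mem_union_left _ (mem_singleton_self y))

lemma LinksHomologyVanish.restrict_compl_singleton (hΓ : IsComplex Γ)
    (h : LinksHomologyVanish k Γ c) (y : Fin n) :
    LinksHomologyVanish k (restrict Γ {y}ᶜ) c := by
  intro S
  by_cases hy : y ∈ S
  · rw [link_eq_empty (isComplex_restrict hΓ _)
      fun hS => (mem_restrict_compl_singleton.mp hS).2 hy]
    exact homologyVanishes_empty
  · rw [link_restrict_compl_singleton Γ hy]
    refine (h S).restrict_compl_singleton (isComplex_link hΓ S) ?_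
    rw [link_link Γ (disjoint_singleton_right.mpr hy)]
    exact h _

/-- Induction on `V`: deleting any vertex `y'` gives `V \ y' ∈ Γ`, which fills in the
`c`-skeleton of the link of a vertex `y` on `V \ y`, so that `V \ y ∈ lk y`. -/
theorem mem_of_linksHomologyVanish (V : Finset (Fin n)) :
    ∀ Γ : Set (Finset (Fin n)), IsComplex Γ → LinksHomologyVanish k Γ c →
      (∀ F ∈ Γ, F ⊆ V) → (∀ F ⊆ V, F.card ≤ c → F ∈ Γ) → V ∈ Γ := by
  induction V using Finset.strongInduction with | H V ih => ?_
  intro Γ hΓ hlinks hsupp hskel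
  rcases lt_trichotomy V.card (c + 1) with hlt | heq | hgt
  · exact hskel V Subset.rfl (by omega)
  · refine mem_of_homologyVanishes heq hsupp (fun F hF => hskel F hF.subset ?_)
      (by simpa only [link_empty] using hlinks ∅)
    have := card_lt_card hF
    omega
  have herase : ∀ y' ∈ V, V.erase y' ∈ Γ := by
    intro y' hy'
    refine (mem_restrict_compl_singleton.mp (ih _ (erase_ssubset hy') _
      (isComplex_restrict hΓ _) (hlinks.restrict_compl_singleton hΓ y') ?_ ?_)).1
    · intro F hF
      obtain ⟨hmem, hyF⟩ := mem_restrict_compl_singleton.mp hF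
      exact subset_erase.mpr ⟨hsupp F hmem, hyF⟩
    · intro F hF hFc
      exact mem_restrict_compl_singleton.mpr
        ⟨hskel F (hF.trans (erase_subset _ _)) hFc, fun hy'F => (mem_erase.mp (hF hy'F)).1 rfl⟩
  obtain ⟨y, hy⟩ : V.Nonempty := card_pos.mp (by omega)
  have hlink : V.erase y ∈ link Γ {y} := by
    refine ih _ (erase_ssubset hy) _ (isComplex_link hΓ _)
      (linksHomologyVanish_link hΓ fun S _ => hlinks S) ?_ ?_
    · intro F hF
      obtain ⟨hyF, hmem⟩ := mem_link_singleton.mp hF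
      exact subset_erase.mpr ⟨(subset_insert y F).trans (hsupp _ hmem), hyF⟩
    · intro F hF hFc
      have hyF : y ∉ F := fun hyF => (mem_erase.mp (hF hyF)).1 rfl
      have hsub : insert y F ⊆ V := insert_subset hy (hF.trans (erase_subset _ _))
      obtain ⟨y', hy'V, hy'F⟩ := exists_of_ssubset (ssubset_of_subset_of_ne hsub fun he => by
        have := card_insert_le y F
        rw [he] at this
        omega)
      exact mem_link_singleton.mpr
        ⟨hyF, hΓ _ (herase y' hy'V) _ (subset_erase.mpr ⟨hsub, hy'F⟩)⟩
  rw [mem_link_singleton, insert_erase hy] at hlink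
  exact hlink.2

end Links

theorem stmt15_general (k : Type) [Field k] {n : ℕ} (Δ : Set (Finset (Fin n)))
    (hΔ : IsComplex Δ) (c : ℕ) (hc1 : 1 ≤ c) (hc : IsFrame Δ c)
    (h2 : ∀ S : Finset (Fin n), 1 ≤ S.card →
      Subsingleton (ReducedHomology k (link Δ S) ((c : ℤ) - 1)))
    (x : Fin n) :
    (∀ F ⊆ ({x}ᶜ : Finset (Fin n)), F.card ≤ c - 1 → F ∈ link Δ {x}) ∧
    (∃ F, F ⊆ ({x}ᶜ : Finset (Fin n)) ∧ F.card = c ∧ F ∉ link Δ {x}) := by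
  have hsmall : ∀ F ⊆ ({x}ᶜ : Finset (Fin n)), F.card ≤ c - 1 → F ∈ link Δ {x} :=
    fun F hF hFc => mem_link_singleton.mpr
      ⟨subset_compl_singleton.mp hF, hc.1 _ ((card_insert_le x F).trans (by omega))⟩
  refine ⟨hsmall, ?_⟩
  by_contra! hfull
  have hlinks : LinksHomologyVanish k (link Δ {x}) c :=
    linksHomologyVanish_link hΔ fun S hxS =>
      homologyVanishes_of_subsingleton (isComplex_link hΔ S) (h2 S (card_pos.mpr ⟨x, hxS⟩))
  have hcompl : {x}ᶜ ∈ link Δ {x} :=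
    mem_of_linksHomologyVanish _ _ (isComplex_link hΔ _) hlinks
      (fun F hF => subset_compl_singleton.mpr (mem_link_singleton.mp hF).1)
      fun F hF hFc => hFc.lt_or_eq.elim (fun hlt => hsmall F hF (by omega)) (hfull F hF)
  rw [mem_link_singleton, insert_compl_self] at hcompl
  obtain ⟨F, -, hF⟩ := hc.2
  exact hF (hΔ _ hcompl.2 _ (subset_univ F))

/-- if `Δ` is 2-CLeray then every vertex link `lk_Δ{x}` has frame
parameter exactly `c - 1` (relative to the vertex set `[n] \ {x}`). -/
theorem stmt15 (k : Type) [Field k] {n : ℕ} (Δ : Set (Finset (Fin n)))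
    (hΔ : IsComplex Δ) (c : ℕ) (hc1 : 1 ≤ c) (hc : IsFrame Δ c)
    (h2 : ∀ S : Finset (Fin n), 1 ≤ S.card →
      Subsingleton (ReducedHomology k (link Δ S) ((c : ℤ) - 1)))
    (x : Fin n) (hx : ({x} : Finset (Fin n)) ∈ Δ) :
    (∀ F ⊆ ({x}ᶜ : Finset (Fin n)), F.card ≤ c - 1 → F ∈ link Δ {x}) ∧
    (∃ F, F ⊆ ({x}ᶜ : Finset (Fin n)) ∧ F.card = c ∧ F ∉ link Δ {x}) :=
  stmt15_general k Δ hΔ c hc1 hc h2 x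

end SCx
end
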